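/- Let p_i, p_j, q_i, q_j ∈ ℝ³ and let n = q_j - q_i with n ≠ 0 and n₀ = n / ‖n‖. If n₀ · (q_j - p_i) ≥ (d + ‖n‖)/2 and (-n₀) · (q_i - p_j) ≥ (d + ‖n‖)/2 for some d ≥ 0, then ‖p_j - p_i‖ ≥ d. -/

import Mathlib

open RealInnerProductSpace

theorem stmt_1 (pi pj qi qj : EuclideanSpace ℝ (Fin 3)) (d : ℝ)
    (hd : 0 ≤ d)
    (hn : qj - qi ≠ 0)
    (hi : ⟪‖qj - qi‖⁻¹ • (qj - qi), qj - pi⟫ ≥ (d + ‖qj - qi‖) / 2)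
    (hj : ⟪-(‖qj - qi‖⁻¹ • (qj - qi)), qi - pj⟫ ≥ (d + ‖qj - qi‖) / 2) :
    ‖pj - pi‖ ≥ d := by
  set u : EuclideanSpace ℝ (Fin 3) := ‖qj - qi‖⁻¹ • (qj - qi) with hu
  have hnpos : 0 < ‖qj - qi‖ := norm_pos_iff.mpr hn
  have hun : ‖u‖ = 1 := by
    rw [hu, norm_smul, norm_inv, norm_norm, inv_mul_cancel₀ hnpos.ne']
  have hj' : ⟪u, pj - qi⟫ ≥ (d + ‖qj - qi‖) / 2 := by
    have := hj
    rwa [inner_neg_left, ← inner_neg_right, neg_sub] at this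
  have hsum : ⟪u, pj - pi⟫ + ⟪u, qj - qi⟫ ≥ d + ‖qj - qi‖ := by
    have h : ⟪u, qj - pi⟫ + ⟪u, pj - qi⟫ ≥ d + ‖qj - qi‖ := by linarith
    calc ⟪u, pj - pi⟫ + ⟪u, qj - qi⟫ = ⟪u, (pj - pi) + (qj - qi)⟫ := by
          rw [inner_add_right]
      _ = ⟪u, (qj - pi) + (pj - qi)⟫ := by
          rw [show pj - pi + (qj - qi) = qj - pi + (pj - qi) by abel]
      _ = ⟪u, qj - pi⟫ + ⟪u, pj - qi⟫ := by rw [inner_add_right]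
      _ ≥ d + ‖qj - qi‖ := h
  have huq : ⟪u, qj - qi⟫ = ‖qj - qi‖ := by
    rw [hu, real_inner_smul_left, real_inner_self_eq_norm_sq]
    field_simp
  have hd' : ⟪u, pj - pi⟫ ≥ d := by rw [huq] at hsum; linarith
  calc ‖pj - pi‖ = ‖u‖ * ‖pj - pi‖ := by rw [hun, one_mul]
    _ ≥ ⟪u, pj - pi⟫ := real_inner_le_norm u _
    _ ≥ d := hd'
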